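/- (Theorem 3, energy balance, eq. (41).) Assume the abstract FDTD-Q region setup. Then for all n ≥ 1, ℋ (n+1) - ℋ n = Δt * s n, i.e., the rate of change of the total energy equals the power supplied through the boundary. -/

import Mathlib

open Matrix

/-!
The cross term `(ℏ/Δt) (ψR n - ψR (n-1)) ⬝ V (ψI (n+1) - ψI n)` of `ℋ n` can be eliminated in two
ways: with the update of `ψR` from `n-1` to `n`, or with the update of `ψI` from `n` to `n+1`.
Expanding `ℋ (n+1)` the second way and `ℋ n` the first way, their difference involves only the two
updates at step `n`. Paired with the increments of `ψI` and `ψR` respectively, these produce the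
same cross term `(ℏ/Δt) ΔψR ⬝ V ΔψI`, which cancels by the symmetry of `V`; with `H` symmetric,
what remains is the boundary work.
-/

variable {ι κ 𝕜 : Type*} [Fintype ι] [Fintype κ] [Field 𝕜]

theorem div_mul_dotProduct_of_smul_eq_smul {ℏ Δt : 𝕜} {u v : ι → 𝕜} (hΔt : Δt ≠ 0)
    (h : ℏ • u = Δt • v) (z : ι → 𝕜) : ℏ / Δt * (z ⬝ᵥ u) = z ⬝ᵥ v := by
  have hz := congrArg (z ⬝ᵥ ·) h
  simp only [dotProduct_smul, smul_eq_mul] at hz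
  rw [div_mul_eq_mul_div, hz, mul_div_cancel_left₀ _ hΔt]

theorem div_mul_dotProduct_mulVec_of_smul_eq_smul {ℏ Δt : 𝕜} {V : Matrix ι ι 𝕜} (hV : Vᵀ = V)
    {x y : ι → 𝕜} (hΔt : Δt ≠ 0) (h : ℏ • V *ᵥ x = Δt • y) (z : ι → 𝕜) :
    ℏ / Δt * (x ⬝ᵥ V *ᵥ z) = z ⬝ᵥ y := by
  rw [← div_mul_dotProduct_of_smul_eq_smul hΔt h z, ← hV, dotProduct_transpose_mulVec, hV]

section LeapFrog

variable {ℏ Δt : 𝕜} {H V : Matrix ι ι 𝕜} {Hb : Matrix ι κ 𝕜}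
  {ψR ψI : ℕ → ι → 𝕜} {gR gI : ℕ → κ → 𝕜}

variable (ℏ Δt H V Hb ψR ψI gR gI) in
def leapFrogEnergy (n : ℕ) : 𝕜 :=
  ψR n ⬝ᵥ H *ᵥ ψR n + ψI n ⬝ᵥ H *ᵥ ψI n
    + ℏ / Δt * ((ψR n - ψR (n - 1)) ⬝ᵥ V *ᵥ (ψI (n + 1) - ψI n))

variable (Hb ψR ψI gR gI) in
def boundaryWork (n : ℕ) : 𝕜 :=
  (ψR (n + 1) - ψR n) ⬝ᵥ Hb *ᵥ (gR (n + 1) + gR n)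
    + (ψI (n + 1) - ψI n) ⬝ᵥ Hb *ᵥ (gI n + gI (n - 1))

theorem leapFrogEnergy_succ_eq_of_updA (hV : Vᵀ = V) (hΔt : Δt ≠ 0) (n : ℕ)
    (hA : ℏ • V *ᵥ (ψR (n + 1) - ψR n) = Δt • (H *ᵥ ψI (n + 1) - Hb *ᵥ gI n)) :
    leapFrogEnergy ℏ Δt H V ψR ψI (n + 1)
      = ψR (n + 1) ⬝ᵥ H *ᵥ ψR (n + 1) + ψI (n + 2) ⬝ᵥ H *ᵥ ψI (n + 1)
        - (ψI (n + 2) - ψI (n + 1)) ⬝ᵥ Hb *ᵥ gI n := by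
  rw [leapFrogEnergy, Nat.add_sub_cancel, div_mul_dotProduct_mulVec_of_smul_eq_smul hV hΔt hA]
  simp only [dotProduct_sub, sub_dotProduct]
  ring

theorem leapFrogEnergy_succ_eq_of_updB (hΔt : Δt ≠ 0) (n : ℕ)
    (hB : ℏ • V *ᵥ (ψI (n + 2) - ψI (n + 1)) = Δt • (-(H *ᵥ ψR (n + 1)) + Hb *ᵥ gR (n + 1))) :
    leapFrogEnergy ℏ Δt H V ψR ψI (n + 1)
      = ψR n ⬝ᵥ H *ᵥ ψR (n + 1) + ψI (n + 1) ⬝ᵥ H *ᵥ ψI (n + 1)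
        + (ψR (n + 1) - ψR n) ⬝ᵥ Hb *ᵥ gR (n + 1) := by
  rw [leapFrogEnergy, Nat.add_sub_cancel, div_mul_dotProduct_of_smul_eq_smul hΔt hB]
  simp only [dotProduct_add, dotProduct_neg, sub_dotProduct]
  ring

theorem leapFrog_step_work_eq (hV : Vᵀ = V) (hΔt : Δt ≠ 0) (n : ℕ)
    (hA : ℏ • V *ᵥ (ψR (n + 1) - ψR n) = Δt • (H *ᵥ ψI (n + 1) - Hb *ᵥ gI n))
    (hB : ℏ • V *ᵥ (ψI (n + 1) - ψI n) = Δt • (-(H *ᵥ ψR n) + Hb *ᵥ gR n)) :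
    (ψR (n + 1) - ψR n) ⬝ᵥ H *ᵥ ψR n + (ψI (n + 1) - ψI n) ⬝ᵥ H *ᵥ ψI (n + 1)
      = (ψR (n + 1) - ψR n) ⬝ᵥ Hb *ᵥ gR n + (ψI (n + 1) - ψI n) ⬝ᵥ Hb *ᵥ gI n := by
  have hcrossA := div_mul_dotProduct_mulVec_of_smul_eq_smul hV hΔt hA (ψI (n + 1) - ψI n)
  have hcrossB := div_mul_dotProduct_of_smul_eq_smul hΔt hB (ψR (n + 1) - ψR n)
  rw [dotProduct_sub] at hcrossA
  rw [dotProduct_add, dotProduct_neg] at hcrossB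
  linear_combination hcrossB - hcrossA

theorem leapFrogEnergy_succ_sub_eq_boundaryWork (hH : Hᵀ = H) (hV : Vᵀ = V) (hΔt : Δt ≠ 0)
    (hA : ∀ n, ℏ • V *ᵥ (ψR (n + 1) - ψR n) = Δt • (H *ᵥ ψI (n + 1) - Hb *ᵥ gI n))
    (hB : ∀ n, ℏ • V *ᵥ (ψI (n + 1) - ψI n) = Δt • (-(H *ᵥ ψR n) + Hb *ᵥ gR n)) (n : ℕ) :
    leapFrogEnergy ℏ Δt H V ψR ψI (n + 2) - leapFrogEnergy ℏ Δt H V ψR ψI (n + 1)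
      = boundaryWork Hb ψR ψI gR gI (n + 1) := by
  have hwork := leapFrog_step_work_eq hV hΔt (n + 1) (hA (n + 1)) (hB (n + 1))
  have hsymmR := hH ▸ dotProduct_transpose_mulVec H (ψR (n + 1)) (ψR (n + 2))
  have hsymmI := hH ▸ dotProduct_transpose_mulVec H (ψI (n + 1)) (ψI (n + 2))
  rw [leapFrogEnergy_succ_eq_of_updB hΔt (n + 1) (hB (n + 2)),
    leapFrogEnergy_succ_eq_of_updA hV hΔt n (hA n), boundaryWork, Nat.add_sub_cancel]
  simp only [mulVec_add, dotProduct_add, sub_dotProduct] at hwork ⊢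
  linear_combination hwork + hsymmR + hsymmI

end LeapFrog

theorem fdtdq_energy_balance
    (N M : ℕ) (ℏ Δt : ℝ) (hΔt : 0 < Δt)
    (H : Matrix (Fin N) (Fin N) ℝ) (hH : Hᵀ = H)
    (Hb : Matrix (Fin N) (Fin M) ℝ)
    (d : Fin N → ℝ)
    (ψR ψI : ℕ → (Fin N → ℝ)) (gR gI : ℕ → (Fin M → ℝ))
    (hUpdA : ∀ n : ℕ, ℏ • (Matrix.diagonal d).mulVec (ψR (n+1) - ψR n)
        = Δt • (H.mulVec (ψI (n+1)) - Hb.mulVec (gI n)))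
    (hUpdB : ∀ n : ℕ, ℏ • (Matrix.diagonal d).mulVec (ψI (n+1) - ψI n)
        = Δt • (-(H.mulVec (ψR n)) + Hb.mulVec (gR n)))
    (En : ℕ → ℝ)
    (hEn : ∀ n : ℕ, 1 ≤ n → En n = ψR n ⬝ᵥ H.mulVec (ψR n)
        + ψI n ⬝ᵥ H.mulVec (ψI n)
        + (ℏ/Δt) * ((ψR n - ψR (n-1)) ⬝ᵥ (Matrix.diagonal d).mulVec (ψI (n+1) - ψI n)))
    (s : ℕ → ℝ)
    (hs : ∀ n : ℕ, 1 ≤ n →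
        s n = (1/Δt) * ((ψR (n+1) - ψR n) ⬝ᵥ Hb.mulVec (gR (n+1) + gR n))
          + (1/Δt) * ((ψI (n+1) - ψI n) ⬝ᵥ Hb.mulVec (gI n + gI (n-1)))) :
    ∀ n : ℕ, 1 ≤ n → En (n+1) - En n = Δt * s n := by
  intro n hn
  obtain ⟨m, rfl⟩ : ∃ m, n = m + 1 := ⟨n - 1, by omega⟩
  have hbalance :=
    leapFrogEnergy_succ_sub_eq_boundaryWork hH (diagonal_transpose d) hΔt.ne' hUpdA hUpdB m
  rw [hEn _ (by omega), hEn _ hn, hs _ hn, ← mul_add, ← mul_assoc, mul_one_div_cancel hΔt.ne',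
    one_mul]
  exact hbalance
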